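/- For all r, s ∈ ℕ with r, s ≥ 1, every n ∈ ℕ, and every x ∈ ℚ, the Cauchy–Changhee mixed-type polynomial of order (r,s) satisfies CC_n^{(r,s)}(x) = Σ_{m=0}^{n} C(n,m) · C_m^{(r)}(x) · Ch_{n−m}^{(s)}, where C_m^{(r)}(x) are the Cauchy polynomials of the first kind of order r and Ch_{n−m}^{(s)} = Ch_{n−m}^{(s)}(0) are the Changhee numbers of order s. -/

import Mathlib

/-- `log(1+t) = ∑_{n ≥ 1} (-1)^{n+1} t^n / n` as a formal power series over `ℚ`. -/
noncomputable def logOneAdd : PowerSeries ℚ :=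
  PowerSeries.mk fun n => if n = 0 then 0 else (-1 : ℚ) ^ (n + 1) / n

/-- `e^{xt} = ∑_{n ≥ 0} x^n t^n / n!` as a formal power series over `ℚ`. -/
noncomputable def expMul (x : ℚ) : PowerSeries ℚ :=
  PowerSeries.mk fun n => x ^ n / (n.factorial : ℚ)

/-- Formal composition `f(g(t))` of power series, intended for `g` with zero
constant term (then `coeff n (g^m) = 0` for `m > n`, so the sum below is the
full composition). -/
noncomputable def psComp (f g : PowerSeries ℚ) : PowerSeries ℚ :=
  PowerSeries.mk fun n =>
    ∑ m ∈ Finset.range (n + 1),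
      PowerSeries.coeff (R := ℚ) m f * PowerSeries.coeff (R := ℚ) n (g ^ m)

/-- `(1+t)^x := exp (x · log(1+t))` as a formal power series over `ℚ`. -/
noncomputable def onePlusPow (x : ℚ) : PowerSeries ℚ :=
  psComp (PowerSeries.exp ℚ) (x • logOneAdd)

/-- The falling factorial `(x)_n = x (x-1) ⋯ (x-n+1)`. -/
def fallFact (x : ℚ) (n : ℕ) : ℚ := ∏ i ∈ Finset.range n, (x - (i : ℚ))

/-
Since `X + 2` and `log(1+t)` are nonzero in the integral domain `ℚ⟦X⟧` and `(1+t)^0 = 1`,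
the defining identities give `∑ CC_k t^k/k! = (∑ C_k t^k/k!) · (∑ Ch_k t^k/k!)`:
the mixed generating function is the product of the two others. Comparing coefficients of
a product of exponential generating functions is the binomial convolution.
-/

open Finset Nat

namespace PowerSeries

section Egf

variable {K : Type*} [Field K] [CharZero K]

theorem mk_div_factorial_mul_mk_div_factorial (a b : ℕ → K) :
    (mk fun k => a k / k !) * (mk fun k => b k / k !) =
      mk fun n => (∑ m ∈ range (n + 1), (n.choose m : K) * a m * b (n - m)) / n ! := by
  ext n
  rw [coeff_mul, Nat.sum_antidiagonal_eq_sum_range_succ_mk, coeff_mk, sum_div]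
  refine sum_congr rfl fun m hm => ?_
  have hn : (n ! : K) ≠ 0 := Nat.cast_ne_zero.mpr n.factorial_ne_zero
  rw [coeff_mk, coeff_mk, Nat.cast_choose K (Nat.lt_succ_iff.mp (mem_range.mp hm))]
  field_simp

theorem mk_div_factorial_injective {a b : ℕ → K}
    (h : (mk fun k => a k / k ! : K⟦X⟧) = mk fun k => b k / k !) : a = b := by
  funext n
  simpa [n.factorial_ne_zero] using congrArg (coeff n) h

end Egf

theorem X_add_C_ne_zero {R : Type*} [Semiring R] [Nontrivial R] (a : R) :
    X + C a ≠ 0 := fun h => by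
  simpa [coeff_C] using congrArg (coeff 1) h

end PowerSeries

theorem psComp_zero_right (f : PowerSeries ℚ) :
    psComp f 0 = PowerSeries.C (PowerSeries.constantCoeff f) := by
  ext n
  rw [psComp, PowerSeries.coeff_mk, sum_range_succ', PowerSeries.coeff_C]
  simp [PowerSeries.coeff_one]

theorem onePlusPow_zero : onePlusPow 0 = 1 := by
  rw [onePlusPow, zero_smul, psComp_zero_right, PowerSeries.constantCoeff_exp, map_one]

theorem logOneAdd_ne_zero : logOneAdd ≠ 0 := fun h => by
  simpa [logOneAdd] using congrArg (PowerSeries.coeff 1) h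

theorem cauchy_changhee_mixed_eq_sum_general
    (r s : ℕ) (n : ℕ) (x : ℚ) (CC C Ch : ℕ → ℚ)
    (hCC : (PowerSeries.X : PowerSeries ℚ) ^ r * (2 : PowerSeries ℚ) ^ s * onePlusPow x =
      logOneAdd ^ r * (PowerSeries.X + 2) ^ s * (PowerSeries.mk fun k => CC k / (k.factorial : ℚ)))
    (hC : (PowerSeries.X : PowerSeries ℚ) ^ r * onePlusPow x =
      logOneAdd ^ r * (PowerSeries.mk fun k => C k / (k.factorial : ℚ)))
    (hCh : (2 : PowerSeries ℚ) ^ s * onePlusPow (0 : ℚ) =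
      (PowerSeries.X + 2) ^ s * (PowerSeries.mk fun k => Ch k / (k.factorial : ℚ))) :
    CC n = ∑ m ∈ Finset.range (n + 1), (n.choose m : ℚ) * C m * Ch (n - m) := by
  rw [onePlusPow_zero, mul_one] at hCh
  have hne : (logOneAdd ^ r * (PowerSeries.X + 2) ^ s : PowerSeries ℚ) ≠ 0 :=
    mul_ne_zero (pow_ne_zero _ logOneAdd_ne_zero)
      (pow_ne_zero _ (by rw [← map_ofNat PowerSeries.C 2]; exact PowerSeries.X_add_C_ne_zero 2))
  have hegf : (PowerSeries.mk fun k => CC k / (k.factorial : ℚ)) =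
      (PowerSeries.mk fun k => C k / (k.factorial : ℚ)) *
        (PowerSeries.mk fun k => Ch k / (k.factorial : ℚ)) := by
    refine mul_left_cancel₀ hne ?_
    calc _ = (PowerSeries.X ^ r * onePlusPow x) * (2 : PowerSeries ℚ) ^ s := by
          rw [← hCC]; ring
      _ = _ := by rw [hC, hCh]; ring
  rw [PowerSeries.mk_div_factorial_mul_mk_div_factorial] at hegf
  exact congrFun (PowerSeries.mk_div_factorial_injective hegf) n

theorem cauchy_changhee_mixed_eq_sum
    (r s : ℕ) (hr : 1 ≤ r) (hs : 1 ≤ s) (n : ℕ) (x : ℚ) (CC C Ch : ℕ → ℚ)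
    (hCC : (PowerSeries.X : PowerSeries ℚ) ^ r * (2 : PowerSeries ℚ) ^ s * onePlusPow x =
      logOneAdd ^ r * (PowerSeries.X + 2) ^ s * (PowerSeries.mk fun k => CC k / (k.factorial : ℚ)))
    (hC : (PowerSeries.X : PowerSeries ℚ) ^ r * onePlusPow x =
      logOneAdd ^ r * (PowerSeries.mk fun k => C k / (k.factorial : ℚ)))
    (hCh : (2 : PowerSeries ℚ) ^ s * onePlusPow (0 : ℚ) =
      (PowerSeries.X + 2) ^ s * (PowerSeries.mk fun k => Ch k / (k.factorial : ℚ))) :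
    CC n = ∑ m ∈ Finset.range (n + 1), (n.choose m : ℚ) * C m * Ch (n - m) :=
  cauchy_changhee_mixed_eq_sum_general r s n x CC C Ch hCC hC hCh
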